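/- Let F be a field of characteristic 2 and d odd. For a circulant matrix A over F and any k ≥ 0, the entries of A^{2^k} are the 2^k-th powers of the entries of A, permuted by the k-th iterate of the permutation j ↦ j·2^{-1} mod d. -/
import Mathlib

def circ {d : ℕ} {F : Type*} (c : ZMod d → F) : Matrix (ZMod d) (ZMod d) F :=
  Matrix.of fun i j => c (j - i)

lemma circ_sq {F : Type*} [Field F] [CharP F 2] {d : ℕ} [NeZero d] (hd : Odd d)
    (a : ZMod d → F) :
    (circ a) ^ 2 = circ (fun j : ZMod d => a ((2 : ZMod d)⁻¹ * j) ^ 2) := by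
  have hu : IsUnit (2 : ZMod d) := by
    have := (ZMod.isUnit_iff_coprime 2 d).2 hd.coprime_two_left
    simpa using this
  have h2 : (2 : ZMod d)⁻¹ * 2 = 1 := ZMod.inv_mul_of_unit _ hu
  ext i j
  rw [sq, Matrix.mul_apply]
  show ∑ l : ZMod d, a (l - i) * a (j - l) = a ((2 : ZMod d)⁻¹ * (j - i)) ^ 2
  set f : ZMod d → F := fun l => a (l - i) * a (j - l) with hf
  set l₀ : ZMod d := (2 : ZMod d)⁻¹ * (i + j) with hl₀
  have h2l₀ : l₀ + l₀ = i + j := by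
    have : l₀ + l₀ = ((2 : ZMod d)⁻¹ * 2) * (i + j) := by ring
    rw [h2] at this; simpa using this
  clear hl₀
  clear_value l₀
  have hfix : ∀ l : ZMod d, i + j - l = l → l = l₀ := by
    intro l hl
    have h2l : l + l = l₀ + l₀ := by rw [h2l₀]; linear_combination -hl
    calc l = ((2 : ZMod d)⁻¹ * 2) * l := by rw [h2]; ring
    _ = (2 : ZMod d)⁻¹ * (l + l) := by ring
    _ = (2 : ZMod d)⁻¹ * (l₀ + l₀) := by rw [h2l]
    _ = ((2 : ZMod d)⁻¹ * 2) * l₀ := by ring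
    _ = l₀ := by rw [h2]; ring
  have hrest : ∑ l ∈ Finset.univ.erase l₀, f l = 0 := by
    apply Finset.sum_involution (fun l _ => i + j - l)
    · intro l hl
      have : f (i + j - l) = f l := by
        simp only [hf]
        have e1 : i + j - l - i = j - l := by ring
        have e2 : j - (i + j - l) = l - i := by ring
        rw [e1, e2, mul_comm]
      rw [this]
      exact CharTwo.add_self_eq_zero _
    · intro l hl _
      intro heq
      exact (Finset.mem_erase.1 hl).1 (hfix l heq)
    · intro l hl
      refine Finset.mem_erase.2 ⟨?_, Finset.mem_univ _⟩
      intro heq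
      apply (Finset.mem_erase.1 hl).1
      have : l = i + j - l₀ := by linear_combination -heq
      rw [this]
      linear_combination -h2l₀
    · intro l hl
      ring
  have hsplit := Finset.add_sum_erase Finset.univ f (Finset.mem_univ l₀)
  rw [← hsplit, hrest, add_zero]
  have e1 : l₀ - i = (2 : ZMod d)⁻¹ * (j - i) := by
    have h2li : (l₀ - i) + (l₀ - i) = j - i := by linear_combination h2l₀
    calc l₀ - i = ((2 : ZMod d)⁻¹ * 2) * (l₀ - i) := by rw [h2]; ring
    _ = (2 : ZMod d)⁻¹ * ((l₀ - i) + (l₀ - i)) := by ring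
    _ = (2 : ZMod d)⁻¹ * (j - i) := by rw [h2li]
  have e2 : j - l₀ = (2 : ZMod d)⁻¹ * (j - i) := by
    have h2li : (j - l₀) + (j - l₀) = j - i := by linear_combination -h2l₀
    calc j - l₀ = ((2 : ZMod d)⁻¹ * 2) * (j - l₀) := by rw [h2]; ring
    _ = (2 : ZMod d)⁻¹ * ((j - l₀) + (j - l₀)) := by ring
    _ = (2 : ZMod d)⁻¹ * (j - i) := by rw [h2li]
  simp only [hf, e1, e2, sq]

theorem stmt17 (F : Type*) [Field F] [CharP F 2] (d : ℕ) [NeZero d] (hd : Odd d)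
    (a : ZMod d → F) (k : ℕ) :
    (circ a) ^ (2 ^ k) =
      circ (fun j : ZMod d => a ((fun j : ZMod d => (2 : ZMod d)⁻¹ * j)^[k] j) ^ (2 ^ k)) := by
  induction k with
  | zero => simp [circ]
  | succ k ih =>
      have : (circ a) ^ (2 ^ (k + 1)) = ((circ a) ^ (2 ^ k)) ^ 2 := by
        rw [← pow_mul, pow_succ]
      rw [this, ih, circ_sq hd]
      ext i j
      simp only [circ, Matrix.of_apply, Function.iterate_succ_apply]
      rw [← pow_mul, ← pow_succ]
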